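/- Let 𝒯, Ω > 0, let N₁, N₂ ∈ ℕ, and set L₁ = 2N₁ + 1, L₂ = 2N₂ + 1. Let w(x) = Σ_{k = −N₁}^{N₁} w_k e^{2πi Ω k x / L₁} be an (L₁/Ω)-periodic trigonometric polynomial with coefficients w_k ∈ ℂ. Then for all τ, ν ∈ ℝ and all sample points x_j = 𝒯 j / L₂ with j = −N₂, …, N₂, one has e^{2πi ν x_j} w(x_j − τ) = Σ_{u = −N₁}^{N₁} Σ_{v = −N₂}^{N₂} e^{2πi x_j v / 𝒯} · w(x_j − u/Ω) · (1/(L₁ L₂)) · D_{N₁}((u − Ω τ)/L₁) · D_{N₂}((v − 𝒯 ν)/L₂). -/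

import Mathlib

/-!
For `L = 2N + 1` the characters `u ↦ e^{2πi r u / L}`, `|r| ≤ 2N`, are orthogonal on the full
period `-N ≤ u ≤ N`. Hence the Dirichlet kernel reproduces trigonometric polynomials
`p(t) = Σ_{|k| ≤ N} c_k e^{2πi k t / L}` from their integer samples:
`Σ_{u=-N}^{N} p(u) · (1/L) D_N((u - a)/L) = p(a)` for every real `a`.
Apply this once in the translation variable, to `t ↦ w(x_j - t/Ω)` at `a = Ωτ`, and once in the
modulation variable, to `t ↦ e^{2πi x_j t/𝒯} = e^{2πi j t/L₂}` at `a = 𝒯ν`; the product of the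
two identities is the double sum.
-/

/-- The `N`-th Dirichlet kernel `D_N(x) = Σ_{k = −N}^{N} e^{2πi k x}`. -/
noncomputable def dirichletKernel (N : ℕ) (x : ℝ) : ℂ :=
  ∑ k ∈ Finset.Icc (-(N : ℤ)) (N : ℤ), Complex.exp (2 * Real.pi * Complex.I * k * x)

open Finset Complex Real

lemma sum_Icc_zpow_eq_zpow_mul_sum_range {K : Type*} [DivisionRing K] {z : K} (hz : z ≠ 0)
    (N : ℕ) :
    ∑ u ∈ Icc (-(N : ℤ)) N, z ^ u = z ^ (-(N : ℤ)) * ∑ i ∈ range (2 * N + 1), z ^ i := by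
  rw [mul_sum]
  refine sum_nbij' (fun u ↦ (u + N).toNat) (fun i ↦ (i : ℤ) - N) ?_ ?_ ?_ ?_ ?_ <;>
    intro a ha <;> simp only [mem_Icc, mem_range] at ha ⊢
  all_goals try omega
  rw [← zpow_natCast, ← zpow_add₀ hz]
  congr 1
  omega

lemma sum_Icc_zpow_eq_zero {K : Type*} [DivisionRing K] {z : K} {N : ℕ}
    (hz : z ^ (2 * N + 1) = 1) (hz1 : z ≠ 1) : ∑ u ∈ Icc (-(N : ℤ)) N, z ^ u = 0 := by
  have hz0 : z ≠ 0 := by rintro rfl; simp at hz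
  rw [sum_Icc_zpow_eq_zpow_mul_sum_range hz0, geom_sum_eq hz1, hz, sub_self, zero_div, mul_zero]

lemma sum_Icc_exp_int_mul_eq_ite (N L : ℕ) (hL : L = 2 * N + 1) (r : ℤ) (hr : |r| ≤ 2 * N) :
    ∑ u ∈ Icc (-(N : ℤ)) N, exp (2 * π * I * r * u / L) = if r = 0 then (L : ℂ) else 0 := by
  have hζ : IsPrimitiveRoot (exp (2 * π * I / L)) L := isPrimitiveRoot_exp L (by omega)
  have hterm : ∀ u : ℤ, exp (2 * π * I * r * u / L) = (exp (2 * π * I / L) ^ r) ^ u := by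
    intro u
    rw [← zpow_mul, ← exp_int_mul]
    push_cast
    congr 1
    ring
  simp only [hterm]
  generalize exp (2 * π * I / L) = ζ at hζ
  split_ifs with h
  · simp only [h, zpow_zero, one_zpow, sum_const, Int.card_Icc, nsmul_eq_mul, mul_one]
    norm_cast
    omega
  · apply sum_Icc_zpow_eq_zero
    · rw [← zpow_natCast, ← zpow_mul, mul_comm, zpow_mul, ← hL, zpow_natCast, hζ.pow_eq_one,
        one_zpow]
    · rw [Ne, hζ.zpow_eq_one_iff_dvd]
      exact fun hdvd ↦ h (Int.eq_zero_of_abs_lt_dvd hdvd (by omega))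

lemma sum_exp_mul_dirichletKernel (N L : ℕ) (hL : L = 2 * N + 1) (k : ℤ) (hk : |k| ≤ N)
    (a : ℝ) :
    ∑ u ∈ Icc (-(N : ℤ)) N,
        exp (2 * π * I * k * u / L) * (1 / L * dirichletKernel N ((u - a) / L))
      = exp (2 * π * I * k * a / L) := by
  have hL0 : (L : ℂ) ≠ 0 := by norm_cast; omega
  have hsplit : ∀ u m : ℤ,
      exp (2 * π * I * k * u / L) * exp (2 * π * I * m * (((u - a) / L : ℝ) : ℂ))
        = exp (2 * π * I * (-m) * a / L) * exp (2 * π * I * (k + m : ℤ) * u / L) := by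
    intro u m
    rw [← Complex.exp_add, ← Complex.exp_add]
    push_cast
    congr 1
    ring
  calc ∑ u ∈ Icc (-(N : ℤ)) N,
        exp (2 * π * I * k * u / L) * (1 / L * dirichletKernel N ((u - a) / L))
      = 1 / L * ∑ m ∈ Icc (-(N : ℤ)) N, exp (2 * π * I * (-m) * a / L) *
          ∑ u ∈ Icc (-(N : ℤ)) N, exp (2 * π * I * (k + m : ℤ) * u / L) := by
        simp only [dirichletKernel, mul_sum, ← hsplit, mul_left_comm (1 / (L : ℂ))]
        exact sum_comm
    _ = 1 / L * ∑ m ∈ Icc (-(N : ℤ)) N, exp (2 * π * I * (-m) * a / L) *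
          if k + m = 0 then (L : ℂ) else 0 := by
        congr 1
        refine sum_congr rfl fun m hm ↦ ?_
        rw [mem_Icc] at hm
        rw [abs_le] at hk
        rw [sum_Icc_exp_int_mul_eq_ite N L hL _ (abs_le.mpr ⟨by omega, by omega⟩)]
    _ = exp (2 * π * I * k * a / L) := by
        have hk' : -k ∈ Icc (-(N : ℤ)) N := by rw [mem_Icc, ← abs_le, abs_neg]; exact hk
        simp only [mul_ite, mul_zero, add_eq_zero_iff_eq_neg', sum_ite_eq', if_pos hk']
        rw [Int.cast_neg, neg_neg, one_div_mul_eq_div, mul_div_cancel_right₀ _ hL0]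

lemma sum_mul_dirichletKernel_of_eq_sum_exp {ι : Type*} (N L : ℕ) (hL : L = 2 * N + 1)
    (s : Finset ι) (c : ι → ℂ) (freq : ι → ℤ) (hfreq : ∀ i ∈ s, |freq i| ≤ N) (p : ℝ → ℂ)
    (hp : ∀ t : ℝ, p t = ∑ i ∈ s, c i * exp (2 * π * I * freq i * t / L)) (a : ℝ) :
    ∑ u ∈ Icc (-(N : ℤ)) N, p u * (1 / L * dirichletKernel N ((u - a) / L)) = p a := by
  simp only [hp, sum_mul, ofReal_intCast]
  rw [sum_comm]
  refine sum_congr rfl fun i hi ↦ ?_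
  simp only [mul_assoc (c i)]
  rw [← mul_sum, sum_exp_mul_dirichletKernel N L hL _ (hfreq i hi)]

lemma sum_translate_mul_dirichletKernel (N L : ℕ) (hL : L = 2 * N + 1) {Ω : ℝ} (hΩ : Ω ≠ 0)
    (wc : ℤ → ℂ) (w : ℝ → ℂ)
    (hw : ∀ y : ℝ, w y = ∑ k ∈ Icc (-(N : ℤ)) N, wc k * exp (2 * π * I * Ω * k * y / L))
    (x τ : ℝ) :
    ∑ u ∈ Icc (-(N : ℤ)) N, w (x - u / Ω) * (1 / L * dirichletKernel N ((u - Ω * τ) / L))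
      = w (x - τ) := by
  have hΩ0 : (Ω : ℂ) ≠ 0 := ofReal_ne_zero.mpr hΩ
  have hshift : ∀ t : ℝ, w (x - t / Ω) = ∑ k ∈ Icc (-(N : ℤ)) N,
      (wc k * exp (2 * π * I * Ω * k * x / L)) * exp (2 * π * I * (-k : ℤ) * t / L) := by
    intro t
    rw [hw]
    refine sum_congr rfl fun k _ ↦ ?_
    rw [mul_assoc (wc k), ← Complex.exp_add]
    congr 2
    push_cast
    field_simp
    ring
  have h := sum_mul_dirichletKernel_of_eq_sum_exp N L hL _ _ _
    (fun k hk ↦ by rw [abs_neg]; exact abs_le.mpr (mem_Icc.mp hk)) _ hshift (Ω * τ)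
  rwa [mul_div_cancel_left₀ _ hΩ] at h

lemma sum_modulate_mul_dirichletKernel (N L : ℕ) (hL : L = 2 * N + 1) {𝒯 : ℝ} (h𝒯 : 𝒯 ≠ 0)
    (j : ℤ) (hj : |j| ≤ N) (ν : ℝ) :
    ∑ v ∈ Icc (-(N : ℤ)) N,
        exp (2 * π * I * (𝒯 * j / L) * v / 𝒯) * (1 / L * dirichletKernel N ((v - 𝒯 * ν) / L))
      = exp (2 * π * I * ν * (𝒯 * j / L)) := by
  have hL0 : (L : ℂ) ≠ 0 := by norm_cast; omega
  have h𝒯0 : (𝒯 : ℂ) ≠ 0 := ofReal_ne_zero.mpr h𝒯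
  have hphase : ∀ v : ℤ, exp (2 * π * I * (𝒯 * j / L) * v / 𝒯) = exp (2 * π * I * j * v / L) := by
    intro v
    congr 1
    field_simp
  simp only [hphase]
  rw [sum_exp_mul_dirichletKernel N L hL j hj (𝒯 * ν)]
  push_cast
  congr 1
  ring

/-- **Sampling formula for a single translation-modulation applied to a trigonometric
polynomial.**  Let `𝒯, Ω > 0`, `N₁, N₂ ∈ ℕ`, `L₁ = 2N₁+1`, `L₂ = 2N₂+1`, and let
`w(x) = Σ_{k=−N₁}^{N₁} w_k e^{2πi Ω k x / L₁}`.  Then for all `τ, ν ∈ ℝ` and all sample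
points `x_j = 𝒯 j / L₂` with `j = −N₂, …, N₂`,
`e^{2πi ν x_j} w(x_j − τ) = Σ_{u=−N₁}^{N₁} Σ_{v=−N₂}^{N₂} e^{2πi x_j v / 𝒯} ·
  w(x_j − u/Ω) · (1/(L₁ L₂)) · D_{N₁}((u − Ω τ)/L₁) · D_{N₂}((v − 𝒯 ν)/L₂)`. -/
theorem sampling_formula_translation_modulation
    (𝒯 Ω : ℝ) (h𝒯 : 0 < 𝒯) (hΩ : 0 < Ω) (N₁ N₂ : ℕ)
    (L₁ L₂ : ℕ) (hL₁ : L₁ = 2 * N₁ + 1) (hL₂ : L₂ = 2 * N₂ + 1)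
    (wc : ℤ → ℂ) (w : ℝ → ℂ)
    (hw : ∀ x : ℝ, w x = ∑ k ∈ Finset.Icc (-(N₁ : ℤ)) (N₁ : ℤ),
      wc k * Complex.exp (2 * Real.pi * Complex.I * Ω * k * x / L₁))
    (τ ν : ℝ) :
    ∀ j ∈ Finset.Icc (-(N₂ : ℤ)) (N₂ : ℤ),
      Complex.exp (2 * Real.pi * Complex.I * ν * (𝒯 * j / L₂)) * w (𝒯 * j / L₂ - τ) =
        ∑ u ∈ Finset.Icc (-(N₁ : ℤ)) (N₁ : ℤ), ∑ v ∈ Finset.Icc (-(N₂ : ℤ)) (N₂ : ℤ),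
          Complex.exp (2 * Real.pi * Complex.I * (𝒯 * j / L₂) * v / 𝒯) *
            w (𝒯 * j / L₂ - u / Ω) *
            ((1 / ((L₁ : ℂ) * (L₂ : ℂ))) *
              dirichletKernel N₁ ((u - Ω * τ) / L₁) *
              dirichletKernel N₂ ((v - 𝒯 * ν) / L₂)) := by
  intro j hj
  rw [mul_comm, ← sum_translate_mul_dirichletKernel N₁ L₁ hL₁ hΩ.ne' wc w hw,
    ← sum_modulate_mul_dirichletKernel N₂ L₂ hL₂ h𝒯.ne' j (abs_le.mpr (mem_Icc.mp hj)) ν,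
    sum_mul_sum]
  refine sum_congr rfl fun u _ ↦ sum_congr rfl fun v _ ↦ ?_
  ring
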